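/- The non-separated example is a genuine homogeneous norm: on the 3-dimensional Heisenberg group H₃(ℝ) = ℝ × ℝ × ℝ with product (x,y,z)·(x',y',z') = (x+x', y+y', z+z' + (1/2)(xy' − yx')), the function ‖(x,y,z)‖ = max(2√(x² + y²), √|z|) satisfies the triangle inequality: ‖p·q‖ ≤ ‖p‖ + ‖q‖ for all p, q ∈ H₃(ℝ). -/
import Mathlib


open Real

noncomputable section

/-- The 3-dimensional Heisenberg group `H₃(ℝ)` as `ℝ × ℝ × ℝ`. -/
abbrev Heis3 := ℝ × ℝ × ℝ

/-- Heisenberg group product on `ℝ × ℝ × ℝ`. -/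
def H3mul (p q : Heis3) : Heis3 :=
  (p.1 + q.1, p.2.1 + q.2.1,
    p.2.2 + q.2.2 + (1 / 2) * (p.1 * q.2.1 - p.2.1 * q.1))

/-- The layered sup quasi-norm `‖(x,y,z)‖ = max(2√(x² + y²), √|z|)`. -/
def nsNorm (p : Heis3) : ℝ :=
  max (2 * Real.sqrt (p.1 ^ 2 + p.2.1 ^ 2)) (Real.sqrt |p.2.2|)

/-- **The non-separated example is a genuine homogeneous norm:** on `H₃(ℝ)`, the function
`‖(x,y,z)‖ = max(2√(x² + y²), √|z|)` satisfies the triangle inequality. -/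
theorem nonseparated_triangle_ineq (p q : Heis3) :
    nsNorm (H3mul p q) ≤ nsNorm p + nsNorm q := by
  obtain ⟨x, y, z⟩ := p
  obtain ⟨x', y', z'⟩ := q
  simp only [nsNorm, H3mul]
  set a := Real.sqrt (x ^ 2 + y ^ 2) with ha_def
  set a' := Real.sqrt (x' ^ 2 + y' ^ 2) with ha'_def
  have ha : 0 ≤ a := Real.sqrt_nonneg _
  have ha' : 0 ≤ a' := Real.sqrt_nonneg _
  have ha2 : a ^ 2 = x ^ 2 + y ^ 2 := Real.sq_sqrt (by positivity)
  have ha'2 : a' ^ 2 = x' ^ 2 + y' ^ 2 := Real.sq_sqrt (by positivity)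
  have hcs : x * x' + y * y' ≤ a * a' := by
    nlinarith [sq_nonneg (x * y' - y * x'), sq_nonneg (a * a' - (x * x' + y * y')),
      sq_nonneg (a * a' + (x * x' + y * y')), mul_nonneg ha ha']
  have hcs2 : |x * y' - y * x'| ≤ a * a' := by
    rw [abs_le]
    constructor <;>
      nlinarith [sq_nonneg (x * x' + y * y'), sq_nonneg (a * a' - (x * y' - y * x')),
        sq_nonneg (a * a' + (x * y' - y * x')), mul_nonneg ha ha']
  set A := max (2 * a) (Real.sqrt |z|) with hA_def
  set B := max (2 * a') (Real.sqrt |z'|) with hB_def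
  have haA : 2 * a ≤ A := le_max_left _ _
  have haB : 2 * a' ≤ B := le_max_left _ _
  have hA0 : 0 ≤ A := le_trans (by positivity) haA
  have hB0 : 0 ≤ B := le_trans (by positivity) haB
  have hzA : |z| ≤ A ^ 2 := by
    have h := le_max_right (2 * a) (Real.sqrt |z|)
    nlinarith [Real.sq_sqrt (abs_nonneg z), Real.sqrt_nonneg |z|]
  have hzB : |z'| ≤ B ^ 2 := by
    have h := le_max_right (2 * a') (Real.sqrt |z'|)
    nlinarith [Real.sq_sqrt (abs_nonneg z'), Real.sqrt_nonneg |z'|]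
  apply max_le
  · have h1 : Real.sqrt ((x + x') ^ 2 + (y + y') ^ 2) ≤ a + a' := by
      have h2 : (x + x') ^ 2 + (y + y') ^ 2 ≤ (a + a') ^ 2 := by nlinarith
      calc Real.sqrt ((x + x') ^ 2 + (y + y') ^ 2) ≤ Real.sqrt ((a + a') ^ 2) :=
            Real.sqrt_le_sqrt h2
        _ = a + a' := Real.sqrt_sq (by positivity)
    linarith
  · have habs : |z + z' + 1 / 2 * (x * y' - y * x')| ≤
        |z| + |z'| + 1 / 2 * |x * y' - y * x'| := by
      calc |z + z' + 1 / 2 * (x * y' - y * x')|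
          ≤ |z| + |z'| + |1 / 2 * (x * y' - y * x')| := abs_add_three _ _ _
        _ = |z| + |z'| + 1 / 2 * |x * y' - y * x'| := by
            rw [abs_mul]; norm_num
    have hmul : (2 * a) * (2 * a') ≤ A * B :=
      mul_le_mul haA haB (by linarith) hA0
    have hfin : |z + z' + 1 / 2 * (x * y' - y * x')| ≤ (A + B) ^ 2 := by
      nlinarith [mul_nonneg hA0 hB0]
    calc Real.sqrt |z + z' + 1 / 2 * (x * y' - y * x')|
        ≤ Real.sqrt ((A + B) ^ 2) := Real.sqrt_le_sqrt hfin
      _ = A + B := Real.sqrt_sq (by positivity)
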